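/- (Differential of the end-point map on variations vanishing at the endpoint.) For all γ, φ ∈ H¹(0) with φ(1) = 0: d_γE(φ) = ( 0, ∫₀¹ ⁅φ,γ̇⁆ dt, ∫₀¹ ⁅γ − ½γ(1), ⁅φ,γ̇⁆⁆ dt ) ∈ V¹ ⊕ V² ⊕ V³. -/

import Mathlib

open MeasureTheory Set intervalIntegral

noncomputable section

variable {𝕓 : Type*} [NormedAddCommGroup 𝕓] [InnerProductSpace ℝ 𝕓] [FiniteDimensional ℝ 𝕓]

/-- The space `H¹(0)` of curves `γ : [0,1] → V¹` with `γ(t) = ∫₀ᵗ γ̇(s) ds` for a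
square-integrable `γ̇` with values in `V¹`.  A curve is identified with its derivative
`γ̇ : ℝ → 𝕓`; the curve itself is recovered by `curve`. -/
def H1zero (V1 : Submodule ℝ 𝕓) : Submodule ℝ (ℝ → 𝕓) where
  carrier := {g | (∀ t, g t ∈ V1) ∧ MemLp g 2 (volume.restrict (Icc (0:ℝ) 1))}
  add_mem' := fun hg hh => ⟨fun t => V1.add_mem (hg.1 t) (hh.1 t), hg.2.add hh.2⟩
  zero_mem' := ⟨fun _ => V1.zero_mem, MemLp.zero⟩
  smul_mem' := fun c _ hg => ⟨fun t => V1.smul_mem c (hg.1 t), hg.2.const_smul c⟩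

/-- The curve associated to a derivative: `γ(t) = ∫₀ᵗ γ̇(s) ds`. -/
def curve (g : ℝ → 𝕓) (t : ℝ) : 𝕓 := ∫ s in (0:ℝ)..t, g s

variable (br : 𝕓 →ₗ[ℝ] 𝕓 →ₗ[ℝ] 𝕓)

/-- First layer of the end-point map: `F¹(γ) = γ(1)`. -/
def F1 (g : ℝ → 𝕓) : 𝕓 := curve g 1

/-- The second layer `γ²(t) = ½∫₀ᵗ ⁅γ,γ̇⁆`. -/
def curve2 (g : ℝ → 𝕓) (t : ℝ) : 𝕓 := (2:ℝ)⁻¹ • ∫ s in (0:ℝ)..t, br (curve g s) (g s)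

/-- Second layer of the end-point map: `F²(γ) = ½∫₀¹ ⁅γ,γ̇⁆`. -/
def F2 (g : ℝ → 𝕓) : 𝕓 := curve2 br g 1

/-- Third layer of the end-point map:
`F³(γ) = ∫₀¹ (½(⁅γ,γ̇²⁆ + ⁅γ²,γ̇⁆) − (1/6)⁅γ,⁅γ,γ̇⁆⁆)`, with `γ̇² = ½⁅γ,γ̇⁆`. -/
def F3 (g : ℝ → 𝕓) : 𝕓 :=
  ∫ t in (0:ℝ)..1,
    ((2:ℝ)⁻¹ • (br (curve g t) ((2:ℝ)⁻¹ • br (curve g t) (g t)) + br (curve2 br g t) (g t))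
      - (6:ℝ)⁻¹ • br (curve g t) (br (curve g t) (g t)))

/-- The end-point map `E(γ) = (F¹(γ), F²(γ), F³(γ)) ∈ V¹ ⊕ V² ⊕ V³`. -/
def Emap (g : ℝ → 𝕓) : 𝕓 × 𝕓 × 𝕓 := (F1 g, F2 br g, F3 br g)

/-- `d_γF¹(φ)`. -/
def dF1 (γ φ : ℝ → 𝕓) : 𝕓 := deriv (fun ε : ℝ => F1 (γ + ε • φ)) 0

/-- `d_γF²(φ)`. -/
def dF2 (γ φ : ℝ → 𝕓) : 𝕓 := deriv (fun ε : ℝ => F2 br (γ + ε • φ)) 0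

/-- `d_γF³(φ)`. -/
def dF3 (γ φ : ℝ → 𝕓) : 𝕓 := deriv (fun ε : ℝ => F3 br (γ + ε • φ)) 0

/-- The differential of the end-point map, `d_γE(φ) = (d/dε)|₀ E(γ + εφ)`. -/
def dE (γ φ : ℝ → 𝕓) : 𝕓 × 𝕓 × 𝕓 := deriv (fun ε : ℝ => Emap br (γ + ε • φ)) 0

/-- The Hessian of the end-point map, `d²_γE(φ,φ) = (d²/dε²)|₀ E(γ + εφ)`. -/
def d2E (γ φ : ℝ → 𝕓) : 𝕓 × 𝕓 × 𝕓 := iteratedDeriv 2 (fun ε : ℝ => Emap br (γ + ε • φ)) 0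

/-- The energy `L(γ) = ½∫₀¹ |γ̇|²`. -/
def energy (g : ℝ → 𝕓) : ℝ := (2:ℝ)⁻¹ * ∫ t in (0:ℝ)..1, ‖g t‖^2

/-- `γ` is a local minimizer of the energy subject to the end-point constraint. -/
def IsLocMin (V1 : Submodule ℝ 𝕓) (γ : ℝ → 𝕓) : Prop :=
  γ ∈ H1zero V1 ∧ ∃ ε > 0, ∀ h ∈ H1zero V1, Emap br h = Emap br γ →
    (∫ t in (0:ℝ)..1, ‖γ t - h t‖^2) < ε → energy γ ≤ energy h

/-- `γ` is singular: the image of `d_γE` spans a proper subspace of `𝔟 = V¹ ⊕ V² ⊕ V³`. -/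
def IsSingular (V1 V2 V3 : Submodule ℝ 𝕓) (γ : ℝ → 𝕓) : Prop :=
  Submodule.span ℝ {x : 𝕓 × 𝕓 × 𝕓 | ∃ φ ∈ H1zero V1, dE br γ φ = x}
    < V1.prod (V2.prod V3)

/-- A triple of linear functionals acting componentwise on `V¹ ⊕ V² ⊕ V³`. -/
def pairL (l1 l2 l3 : 𝕓 →ₗ[ℝ] ℝ) (x : 𝕓 × 𝕓 × 𝕓) : ℝ := l1 x.1 + l2 x.2.1 + l3 x.2.2

/-- `𝔟` is a Carnot algebra of step at most 3 with layers `V¹, V², V³` and Lie bracket `br`: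
the layers form an internal direct sum, `V² = span ⁅V¹,V¹⁆`, `V³ = span ⁅V¹,V²⁆`,
`⁅V¹,V³⁆ = 0`, and `br` is alternating and satisfies the Jacobi identity. -/
def CarnotStep3 (V1 V2 V3 : Submodule ℝ 𝕓) : Prop :=
  DirectSum.IsInternal ![V1, V2, V3] ∧
  V2 = Submodule.span ℝ {x | ∃ a ∈ V1, ∃ b ∈ V1, x = br a b} ∧
  V3 = Submodule.span ℝ {x | ∃ a ∈ V1, ∃ ξ ∈ V2, x = br a ξ} ∧
  (∀ a ∈ V1, ∀ ζ ∈ V3, br a ζ = 0) ∧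
  (∀ x, br x x = 0) ∧
  (∀ x y z, br x (br y z) + br y (br z x) + br z (br x y) = 0)

/-- The quadratic form `Q` restricted to `K` has finite Morse index: there is a uniform
bound on the dimension of subspaces contained in `K` on which `Q` is negative definite. -/
def HasFiniteMorseIndexOn (Q : (ℝ → 𝕓) → ℝ) (K : Set (ℝ → 𝕓)) : Prop :=
  ∃ N : ℕ, ∀ P : Submodule ℝ (ℝ → 𝕓), (P : Set (ℝ → 𝕓)) ⊆ K →
    (∀ φ ∈ P, φ ≠ 0 → Q φ < 0) → Module.rank ℝ P ≤ N

/-- `γ` is a normal geodesic: there are multipliers `λ², λ³` such that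
`∫₀¹ (⟨γ̇,φ̇⟩ + λ²⁅φ,γ̇⁆ + λ³⁅γ − ½γ(1), ⁅φ,γ̇⁆⁆) dt = 0` for all `φ ∈ H¹(0)` with `φ(1) = 0`. -/
def IsNormal (V1 : Submodule ℝ 𝕓) (γ : ℝ → 𝕓) : Prop :=
  ∃ l2 l3 : 𝕓 →ₗ[ℝ] ℝ,
    ∀ φ ∈ H1zero V1, curve φ 1 = 0 →
      (∫ t in (0:ℝ)..1,
        ((inner ℝ (γ t) (φ t) : ℝ) + l2 (br (curve φ t) (γ t))
          + l3 (br (curve γ t - (2:ℝ)⁻¹ • curve γ 1) (br (curve φ t) (γ t))))) = 0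

/-!
Along the line `γ + εφ` each layer of the end-point map is a polynomial in `ε` (quadratic for
`F²`, cubic for `F³`) with iterated integrals of brackets `⁅u, v̇⁆` as coefficients, so the
differential is the linear coefficient. It takes the stated form after integrating by parts,
`∫₀ᵗ ⁅u, v̇⁆ - ∫₀ᵗ ⁅v, u̇⁆ = ⁅u(t), v(t)⁆` (Fubini on the two triangles of `[0, t]²`), whose
boundary terms vanish at `t = 1` since `φ(1) = 0`. Applied to `γ` and to `⁅γ, φ̇⁆ - ⁅φ, γ̇⁆`,
whose primitive is `⁅γ, φ⁆` by the same formula, it combines with the Jacobi identity into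
`∫ ⁅γ, ⁅γ, φ̇⁆⁆ = 2 ∫ ⁅γ, ⁅φ, γ̇⁆⁆ - ∫ ⁅φ, ⁅γ, γ̇⁆⁆`.
-/

section Calculus

variable {E F G : Type*} [NormedAddCommGroup E] [NormedSpace ℝ E]
  [NormedAddCommGroup F] [NormedSpace ℝ F] [NormedAddCommGroup G] [NormedSpace ℝ G]

theorem ContinuousLinearMap.bilinear_integral_eq_add [CompleteSpace E] [CompleteSpace F]
    [CompleteSpace G] (B : E →L[ℝ] F →L[ℝ] G) {μ : Measure ℝ}
    [SFinite μ] {u : ℝ → E} {v : ℝ → F} (hu : Integrable u μ) (hv : Integrable v μ) :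
    B (∫ s, u s ∂μ) (∫ s, v s ∂μ) =
      (∫ s, B (u s) (∫ r in Iic s, v r ∂μ) ∂μ) + ∫ r, B (∫ s in Iio r, u s ∂μ) (v r) ∂μ := by
  set f : ℝ × ℝ → G := fun p => B (u p.1) (v p.2)
  have hf : Integrable f (μ.prod μ) := hu.op_fst_snd (by fun_prop) ⟨‖B‖, B.le_opNorm₂⟩ hv
  have hsplit :
      f = {p : ℝ × ℝ | p.2 ≤ p.1}.indicator f + {p : ℝ × ℝ | p.1 < p.2}.indicator f := by
    ext p
    by_cases h : p.2 ≤ p.1 <;> simp [indicator, h, not_le.mp]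
  have hle : MeasurableSet {p : ℝ × ℝ | p.2 ≤ p.1} := measurableSet_le measurable_snd measurable_fst
  have hlt : MeasurableSet {p : ℝ × ℝ | p.1 < p.2} := measurableSet_lt measurable_fst measurable_snd
  rw [← integral_prod_bilin B hu hv]
  change ∫ p, f p ∂μ.prod μ = _
  rw [hsplit, integral_add' (hf.indicator hle) (hf.indicator hlt),
    integral_prod _ (hf.indicator hle), integral_prod_symm _ (hf.indicator hlt)]
  congr 1
  · refine integral_congr_ae (ae_of_all _ fun s => ?_)
    dsimp only
    rw [← (B (u s)).integral_comp_comm hv.integrableOn,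
      ← MeasureTheory.integral_indicator measurableSet_Iic]
    rfl
  · refine integral_congr_ae (ae_of_all _ fun r => ?_)
    change _ = B.flip (v r) (∫ s in Iio r, u s ∂μ)
    rw [← (B.flip (v r)).integral_comp_comm hu.integrableOn,
      ← MeasureTheory.integral_indicator measurableSet_Iio]
    rfl

theorem ContinuousLinearMap.bilinear_intervalIntegral_eq_add [CompleteSpace E]
    [CompleteSpace F] [CompleteSpace G] (B : E →L[ℝ] F →L[ℝ] G)
    {u : ℝ → E} {v : ℝ → F} {a b : ℝ} (hab : a ≤ b) (hu : IntervalIntegrable u volume a b)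
    (hv : IntervalIntegrable v volume a b) :
    B (∫ s in a..b, u s) (∫ s in a..b, v s) =
      (∫ s in a..b, B (u s) (∫ r in a..s, v r)) + ∫ s in a..b, B (∫ r in a..s, u r) (v s) := by
  simp only [intervalIntegral.integral_of_le hab]
  rw [B.bilinear_integral_eq_add hu.1 hv.1]
  congr 1 <;> refine setIntegral_congr_fun measurableSet_Ioc fun s hs => ?_ <;>
    rw [Measure.restrict_restrict (by measurability)]
  · rw [Iic_inter_Ioc_of_le hs.2, intervalIntegral.integral_of_le hs.1.le]
  · rw [Measure.restrict_congr_set ((Iio_ae_eq_Iic (μ := volume)).inter (ae_eq_refl (Ioc a b))),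
      Iic_inter_Ioc_of_le hs.2, intervalIntegral.integral_of_le hs.1.le]

theorem IntervalIntegrable.continuousLinearMap_apply {M : ℝ → F →L[ℝ] G} {u : ℝ → F} {a b : ℝ}
    (hM : ContinuousOn M (uIcc a b)) (hu : IntervalIntegrable u volume a b) :
    IntervalIntegrable (fun t => M t (u t)) volume a b := by
  obtain ⟨C, hC⟩ := isCompact_uIcc.exists_bound_of_continuousOn hM
  rw [intervalIntegrable_iff] at hu ⊢
  have hMm : AEStronglyMeasurable M (volume.restrict (uIoc a b)) :=
    (hM.mono uIoc_subset_uIcc).aestronglyMeasurable measurableSet_uIoc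
  refine (hu.norm.const_mul C).mono'
    (isBoundedBilinearMap_apply.continuous.comp_aestronglyMeasurable
      (hMm.prodMk hu.aestronglyMeasurable)) ?_
  filter_upwards [ae_restrict_mem measurableSet_uIoc] with t ht
  exact (M t).le_of_opNorm_le (hC t (uIoc_subset_uIcc ht)) _

theorem hasDerivAt_quadratic_smul (c₀ c₁ c₂ : E) :
    HasDerivAt (fun ε : ℝ => c₀ + ε • c₁ + ε ^ 2 • c₂) c₁ 0 := by
  refine ((((hasDerivAt_id (0 : ℝ)).smul_const c₁).const_add c₀).add
    ((hasDerivAt_pow 2 (0 : ℝ)).smul_const c₂)).congr_deriv ?_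
  simp

theorem hasDerivAt_cubic_smul (c₀ c₁ c₂ c₃ : E) :
    HasDerivAt (fun ε : ℝ => c₀ + ε • c₁ + ε ^ 2 • c₂ + ε ^ 3 • c₃) c₁ 0 := by
  refine ((hasDerivAt_quadratic_smul c₀ c₁ c₂).add
    ((hasDerivAt_pow 3 (0 : ℝ)).smul_const c₃)).congr_deriv ?_
  simp

theorem intervalIntegral.integral_quadratic_smul {a b : ℝ} {c₀ c₁ c₂ : ℝ → E}
    (h₀ : IntervalIntegrable c₀ volume a b) (h₁ : IntervalIntegrable c₁ volume a b)
    (h₂ : IntervalIntegrable c₂ volume a b) (ε : ℝ) :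
    ∫ t in a..b, (c₀ t + ε • c₁ t + ε ^ 2 • c₂ t) =
      (∫ t in a..b, c₀ t) + ε • (∫ t in a..b, c₁ t) + ε ^ 2 • ∫ t in a..b, c₂ t := by
  have i₁ : IntervalIntegrable (fun t => ε • c₁ t) volume a b := h₁.smul ε
  have i₂ : IntervalIntegrable (fun t => ε ^ 2 • c₂ t) volume a b := h₂.smul _
  rw [integral_add (h₀.add i₁) i₂, integral_add h₀ i₁, integral_smul, integral_smul]

theorem intervalIntegral.integral_cubic_smul {a b : ℝ} {c₀ c₁ c₂ c₃ : ℝ → E}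
    (h₀ : IntervalIntegrable c₀ volume a b) (h₁ : IntervalIntegrable c₁ volume a b)
    (h₂ : IntervalIntegrable c₂ volume a b) (h₃ : IntervalIntegrable c₃ volume a b) (ε : ℝ) :
    ∫ t in a..b, (c₀ t + ε • c₁ t + ε ^ 2 • c₂ t + ε ^ 3 • c₃ t) =
      (∫ t in a..b, c₀ t) + ε • (∫ t in a..b, c₁ t) + ε ^ 2 • (∫ t in a..b, c₂ t) +
        ε ^ 3 • ∫ t in a..b, c₃ t := by
  have i₁ : IntervalIntegrable (fun t => ε • c₁ t) volume a b := h₁.smul ε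
  have i₂ : IntervalIntegrable (fun t => ε ^ 2 • c₂ t) volume a b := h₂.smul _
  have i₃ : IntervalIntegrable (fun t => ε ^ 3 • c₃ t) volume a b := h₃.smul _
  rw [integral_add ((h₀.add i₁).add i₂) i₃, integral_quadratic_smul h₀ h₁ h₂, integral_smul]

end Calculus

theorem IntervalIntegrable.mono_uIcc_zero {E : Type*} [NormedAddCommGroup E] {u : ℝ → E}
    (hu : IntervalIntegrable u volume 0 1) {t : ℝ} (ht : t ∈ uIcc 0 1) :
    IntervalIntegrable u volume 0 t :=
  hu.mono_set (uIcc_subset_uIcc left_mem_uIcc ht)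

section Curves

variable {V : Type*} [NormedAddCommGroup V] [InnerProductSpace ℝ V] {u v : ℝ → V}

theorem intervalIntegrable_of_mem_H1zero {V1 : Submodule ℝ V} (hu : u ∈ H1zero V1) :
    IntervalIntegrable u volume 0 1 :=
  (intervalIntegrable_iff_integrableOn_Icc_of_le zero_le_one).2 (hu.2.integrable one_le_two)

theorem continuousOn_curve (hu : IntervalIntegrable u volume 0 1) :
    ContinuousOn (curve u) (uIcc 0 1) :=
  continuousOn_primitive_interval ((intervalIntegrable_iff' (μ := volume)).1 hu)

theorem curve_congr (h : EqOn u v (uIcc 0 1)) {t : ℝ} (ht : t ∈ uIcc 0 1) :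
    curve u t = curve v t :=
  integral_congr (h.mono (uIcc_subset_uIcc left_mem_uIcc ht))

theorem curve_add (hu : IntervalIntegrable u volume 0 1) (hv : IntervalIntegrable v volume 0 1)
    {t : ℝ} (ht : t ∈ uIcc 0 1) : curve (u + v) t = curve u t + curve v t :=
  integral_add (hu.mono_uIcc_zero ht) (hv.mono_uIcc_zero ht)

theorem curve_sub (hu : IntervalIntegrable u volume 0 1) (hv : IntervalIntegrable v volume 0 1)
    {t : ℝ} (ht : t ∈ uIcc 0 1) : curve (u - v) t = curve u t - curve v t :=
  integral_sub (hu.mono_uIcc_zero ht) (hv.mono_uIcc_zero ht)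

theorem curve_smul (c t : ℝ) : curve (c • u) t = c • curve u t :=
  integral_smul c u

theorem curve_add_smul (hu : IntervalIntegrable u volume 0 1) (hv : IntervalIntegrable v volume 0 1)
    (ε : ℝ) {t : ℝ} (ht : t ∈ uIcc 0 1) : curve (u + ε • v) t = curve u t + ε • curve v t := by
  rw [curve_add hu (hv.smul ε) ht, curve_smul]

theorem hasDerivAt_F1 {γ φ : ℝ → V} (hγ : IntervalIntegrable γ volume 0 1)
    (hφ : IntervalIntegrable φ volume 0 1) :
    HasDerivAt (fun ε : ℝ => F1 (γ + ε • φ)) (curve φ 1) 0 := by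
  simp only [F1, curve_add_smul hγ hφ _ right_mem_uIcc]
  exact (((hasDerivAt_id (0 : ℝ)).smul_const _).const_add _).congr_deriv (one_smul _ _)

end Curves

section Bracket

variable {V : Type*} [NormedAddCommGroup V] [InnerProductSpace ℝ V] (br : V →ₗ[ℝ] V →ₗ[ℝ] V)
  {u v w γ φ : ℝ → V}

/-- `curveBracket br u v = ⁅u, v̇⁆`: curves are identified with their velocities, as in `curve`. -/
def curveBracket (u v : ℝ → V) (t : ℝ) : V := br (curve u t) (v t)

/-- Polarisation of the integrand of `F³`, which is `cubicBracket br g g g` (`1/12 = 1/4 - 1/6`). -/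
def cubicBracket (u v w : ℝ → V) (t : ℝ) : V :=
  (12 : ℝ)⁻¹ • curveBracket br u (curveBracket br v w) t +
    (4 : ℝ)⁻¹ • curveBracket br (curveBracket br u v) w t

theorem curve2_eq_smul_curve_curveBracket (g : ℝ → V) (t : ℝ) :
    curve2 br g t = (2 : ℝ)⁻¹ • curve (curveBracket br g g) t :=
  rfl

theorem F3_eq_integral_cubicBracket (g : ℝ → V) :
    F3 br g = ∫ t in (0 : ℝ)..1, cubicBracket br g g g t := by
  refine integral_congr fun t _ => ?_
  simp only [cubicBracket, curveBracket, curve2_eq_smul_curve_curveBracket, map_smul,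
    LinearMap.smul_apply]
  module

theorem curveBracket_add_smul (hγ : IntervalIntegrable γ volume 0 1)
    (hφ : IntervalIntegrable φ volume 0 1) (ε : ℝ) :
    EqOn (curveBracket br (γ + ε • φ) (γ + ε • φ))
      (fun t => curveBracket br γ γ t + ε • (curveBracket br γ φ t + curveBracket br φ γ t) +
        ε ^ 2 • curveBracket br φ φ t) (uIcc 0 1) := by
  intro t ht
  simp only [curveBracket, curve_add_smul hγ hφ ε ht, Pi.add_apply, Pi.smul_apply, map_add,
    map_smul, LinearMap.add_apply, LinearMap.smul_apply]
  module

variable [FiniteDimensional ℝ V]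

theorem IntervalIntegrable.curveBracket (hu : IntervalIntegrable u volume 0 1)
    (hv : IntervalIntegrable v volume 0 1) :
    IntervalIntegrable (curveBracket br u v) volume 0 1 :=
  hv.continuousLinearMap_apply (M := fun t => br.toContinuousBilinearMap (curve u t))
    (br.toContinuousBilinearMap.continuous.comp_continuousOn (continuousOn_curve hu))

theorem IntervalIntegrable.cubicBracket (hu : IntervalIntegrable u volume 0 1)
    (hv : IntervalIntegrable v volume 0 1) (hw : IntervalIntegrable w volume 0 1) :
    IntervalIntegrable (cubicBracket br u v w) volume 0 1 :=
  ((hu.curveBracket br (hv.curveBracket br hw)).smul _).add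
    (((hu.curveBracket br hv).curveBracket br hw).smul _)

theorem curve_curveBracket_add_smul (hγ : IntervalIntegrable γ volume 0 1)
    (hφ : IntervalIntegrable φ volume 0 1) (ε : ℝ) {t : ℝ} (ht : t ∈ uIcc 0 1) :
    curve (curveBracket br (γ + ε • φ) (γ + ε • φ)) t =
      curve (curveBracket br γ γ) t +
        ε • (curve (curveBracket br γ φ) t + curve (curveBracket br φ γ) t) +
        ε ^ 2 • curve (curveBracket br φ φ) t := by
  have hγφ := hγ.curveBracket br hφ
  have hφγ := hφ.curveBracket br hγ
  rw [curve_congr (curveBracket_add_smul br hγ hφ ε) ht, curve, integral_quadratic_smul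
    ((hγ.curveBracket br hγ).mono_uIcc_zero ht) ((hγφ.add hφγ).mono_uIcc_zero ht)
    ((hφ.curveBracket br hφ).mono_uIcc_zero ht), integral_add (hγφ.mono_uIcc_zero ht)
    (hφγ.mono_uIcc_zero ht)]
  rfl

theorem cubicBracket_add_smul (hγ : IntervalIntegrable γ volume 0 1)
    (hφ : IntervalIntegrable φ volume 0 1) (ε : ℝ) :
    EqOn (cubicBracket br (γ + ε • φ) (γ + ε • φ) (γ + ε • φ))
      (fun t => cubicBracket br γ γ γ t +
        ε • (cubicBracket br φ γ γ t + cubicBracket br γ φ γ t + cubicBracket br γ γ φ t) +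
        ε ^ 2 • (cubicBracket br γ φ φ t + cubicBracket br φ γ φ t + cubicBracket br φ φ γ t) +
        ε ^ 3 • cubicBracket br φ φ φ t) (uIcc 0 1) := by
  intro t ht
  simp only [cubicBracket, curveBracket, curve_curveBracket_add_smul br hγ hφ ε ht,
    curve_add_smul hγ hφ ε ht, Pi.add_apply, Pi.smul_apply, map_add, map_smul,
    LinearMap.add_apply, LinearMap.smul_apply]
  module

theorem hasDerivAt_F2 (hγ : IntervalIntegrable γ volume 0 1)
    (hφ : IntervalIntegrable φ volume 0 1) :
    HasDerivAt (fun ε : ℝ => F2 br (γ + ε • φ))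
      ((2 : ℝ)⁻¹ • (curve (curveBracket br γ φ) 1 + curve (curveBracket br φ γ) 1)) 0 := by
  simp only [F2, curve2_eq_smul_curve_curveBracket,
    curve_curveBracket_add_smul br hγ hφ _ right_mem_uIcc]
  exact (hasDerivAt_quadratic_smul _ _ _).const_smul _

theorem hasDerivAt_F3 (hγ : IntervalIntegrable γ volume 0 1)
    (hφ : IntervalIntegrable φ volume 0 1) :
    HasDerivAt (fun ε : ℝ => F3 br (γ + ε • φ))
      (∫ t in (0 : ℝ)..1,
        (cubicBracket br φ γ γ t + cubicBracket br γ φ γ t + cubicBracket br γ γ φ t)) 0 := by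
  have expand (ε : ℝ) := integral_congr (μ := volume) (cubicBracket_add_smul br hγ hφ ε)
  simp only [F3_eq_integral_cubicBracket, expand, integral_cubic_smul (hγ.cubicBracket br hγ hγ)
    (((hφ.cubicBracket br hγ hγ).add (hγ.cubicBracket br hφ hγ)).add (hγ.cubicBracket br hγ hφ))
    (((hγ.cubicBracket br hφ hφ).add (hφ.cubicBracket br hγ hφ)).add (hφ.cubicBracket br hφ hγ))
    (hφ.cubicBracket br hφ hφ)]
  exact hasDerivAt_cubic_smul _ _ _ _

theorem curve_curveBracket_sub_curveBracket (halt : br.IsAlt)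
    (hu : IntervalIntegrable u volume 0 1) (hv : IntervalIntegrable v volume 0 1) {t : ℝ}
    (ht : t ∈ uIcc 0 1) :
    curve (curveBracket br u v - curveBracket br v u) t = br (curve u t) (curve v t) := by
  have ht₀ : 0 ≤ t := by
    rw [uIcc_of_le zero_le_one] at ht
    exact ht.1
  have hparts : br (curve u t) (curve v t) =
      (∫ s in (0 : ℝ)..t, br (u s) (curve v s)) + curve (curveBracket br u v) t :=
    br.toContinuousBilinearMap.bilinear_intervalIntegral_eq_add ht₀
      (hu.mono_uIcc_zero ht) (hv.mono_uIcc_zero ht)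
  have hswap : ∫ s in (0 : ℝ)..t, br (u s) (curve v s) = -curve (curveBracket br v u) t := by
    rw [curve, ← intervalIntegral.integral_neg]
    exact integral_congr fun s _ => (halt.neg _ _).symm
  rw [curve_sub (hu.curveBracket br hv) (hv.curveBracket br hu) ht, hparts, hswap]
  abel

theorem curve_curveBracket_comm_of_curve_eq_zero (halt : br.IsAlt)
    (hu : IntervalIntegrable u volume 0 1) (hv : IntervalIntegrable v volume 0 1)
    (hv₁ : curve v 1 = 0) : curve (curveBracket br u v) 1 = curve (curveBracket br v u) 1 := by
  have h := curve_curveBracket_sub_curveBracket br halt hu hv right_mem_uIcc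
  rw [curve_sub (hu.curveBracket br hv) (hv.curveBracket br hu) right_mem_uIcc, hv₁,
    map_zero] at h
  exact sub_eq_zero.1 h

theorem curve_curveBracket_jacobi (halt : br.IsAlt)
    (hjac : ∀ x y z, br x (br y z) + br y (br z x) + br z (br x y) = 0)
    (hγ : IntervalIntegrable γ volume 0 1) (hφ : IntervalIntegrable φ volume 0 1)
    (hφ₁ : curve φ 1 = 0) :
    curve (curveBracket br γ (curveBracket br γ φ)) 1 =
      (2 : ℝ) • curve (curveBracket br γ (curveBracket br φ γ)) 1 -
        curve (curveBracket br φ (curveBracket br γ γ)) 1 := by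
  set ρ := curveBracket br γ φ - curveBracket br φ γ
  have hρ : IntervalIntegrable ρ volume 0 1 := (hγ.curveBracket br hφ).sub (hφ.curveBracket br hγ)
  have hρ₁ : curve ρ 1 = 0 := by
    rw [curve_curveBracket_sub_curveBracket br halt hγ hφ right_mem_uIcc, hφ₁, map_zero]
  have hγρ : curveBracket br γ ρ =
      curveBracket br γ (curveBracket br γ φ) - curveBracket br γ (curveBracket br φ γ) := by
    ext s
    simp only [curveBracket, ρ, Pi.sub_apply, map_sub]
  have hργ : EqOn (curveBracket br ρ γ) (curveBracket br γ (curveBracket br φ γ) -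
      curveBracket br φ (curveBracket br γ γ)) (uIcc 0 1) := by
    intro s hs
    have h := hjac (γ s) (curve γ s) (curve φ s)
    rw [← halt.neg (curve γ s), map_neg] at h
    have hskew := halt.neg (γ s) (br (curve γ s) (curve φ s))
    simp only [curveBracket, ρ, curve_curveBracket_sub_curveBracket br halt hγ hφ hs, Pi.sub_apply]
    linear_combination (norm := module) -h - hskew
  have h := curve_curveBracket_sub_curveBracket br halt hγ hρ right_mem_uIcc
  rw [hρ₁, map_zero, curve_sub (hγ.curveBracket br hρ) (hρ.curveBracket br hγ) right_mem_uIcc,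
    curve_congr hργ right_mem_uIcc, hγρ] at h
  have hγγφ := hγ.curveBracket br (hγ.curveBracket br hφ)
  have hγφγ := hγ.curveBracket br (hφ.curveBracket br hγ)
  have hφγγ := hφ.curveBracket br (hγ.curveBracket br hγ)
  rw [curve_sub hγγφ hγφγ right_mem_uIcc, curve_sub hγφγ hφγγ right_mem_uIcc] at h
  linear_combination (norm := module) h

theorem integral_cubicBracket (hu : IntervalIntegrable u volume 0 1)
    (hv : IntervalIntegrable v volume 0 1) (hw : IntervalIntegrable w volume 0 1) :
    ∫ t in (0 : ℝ)..1, cubicBracket br u v w t =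
      (12 : ℝ)⁻¹ • curve (curveBracket br u (curveBracket br v w)) 1 +
        (4 : ℝ)⁻¹ • curve (curveBracket br (curveBracket br u v) w) 1 := by
  rw [← curve_smul, ← curve_smul,
    ← curve_add (((hu.curveBracket br (hv.curveBracket br hw))).smul _)
      (((hu.curveBracket br hv).curveBracket br hw).smul _) right_mem_uIcc]
  rfl

theorem integral_br_curve_sub_const (hu : IntervalIntegrable u volume 0 1)
    (hv : IntervalIntegrable v volume 0 1) (a : V) :
    ∫ t in (0 : ℝ)..1, br (curve u t - a) (v t) =
      curve (curveBracket br u v) 1 - br a (curve v 1) := by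
  let L := br.toContinuousBilinearMap a
  have hL : IntervalIntegrable (fun t => L (v t)) volume 0 1 :=
    hv.continuousLinearMap_apply continuousOn_const
  calc _ = ∫ t in (0 : ℝ)..1, (curveBracket br u v t - L (v t)) :=
        integral_congr fun t _ => by simp [L, curveBracket]
    _ = _ := by
        rw [integral_sub (hu.curveBracket br hv) hL, L.intervalIntegral_comp_comm hv]
        rfl

theorem integral_cubicBracket_variation (halt : br.IsAlt)
    (hjac : ∀ x y z, br x (br y z) + br y (br z x) + br z (br x y) = 0)
    (hγ : IntervalIntegrable γ volume 0 1) (hφ : IntervalIntegrable φ volume 0 1)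
    (hφ₁ : curve φ 1 = 0) :
    ∫ t in (0 : ℝ)..1,
        (cubicBracket br φ γ γ t + cubicBracket br γ φ γ t + cubicBracket br γ γ φ t) =
      ∫ t in (0 : ℝ)..1, br (curve γ t - (2 : ℝ)⁻¹ • curve γ 1) (br (curve φ t) (γ t)) := by
  have hγφ := hγ.curveBracket br hφ
  have hφγ := hφ.curveBracket br hγ
  have hγγ := hγ.curveBracket br hγ
  have hφ_γγ := curve_curveBracket_comm_of_curve_eq_zero br halt hγγ hφ hφ₁
  have hγφ_γ := curve_curveBracket_sub_curveBracket br halt hγφ hγ right_mem_uIcc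
  have hφγ_γ := curve_curveBracket_sub_curveBracket br halt hφγ hγ right_mem_uIcc
  rw [curve_sub (hγφ.curveBracket br hγ) (hγ.curveBracket br hγφ) right_mem_uIcc,
    curve_curveBracket_comm_of_curve_eq_zero br halt hγ hφ hφ₁] at hγφ_γ
  rw [curve_sub (hφγ.curveBracket br hγ) (hγ.curveBracket br hφγ) right_mem_uIcc] at hφγ_γ
  have hjacobi := curve_curveBracket_jacobi br halt hjac hγ hφ hφ₁
  have hskew := halt.neg (curve γ 1) (curve (curveBracket br φ γ) 1)
  rw [integral_add ((hφ.cubicBracket br hγ hγ).add (hγ.cubicBracket br hφ hγ))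
      (hγ.cubicBracket br hγ hφ), integral_add (hφ.cubicBracket br hγ hγ)
      (hγ.cubicBracket br hφ hγ), integral_cubicBracket br hφ hγ hγ,
    integral_cubicBracket br hγ hφ hγ, integral_cubicBracket br hγ hγ hφ]
  refine Eq.trans ?_ (integral_br_curve_sub_const br hγ hφγ _).symm
  rw [map_smul, LinearMap.smul_apply]
  linear_combination (norm := module)
    (4 : ℝ)⁻¹ • (hγφ_γ + hφγ_γ + hφ_γγ) + (3 : ℝ)⁻¹ • hjacobi - (2 : ℝ)⁻¹ • hskew

end Bracket

/-- the differential of the end-point map on variations vanishing at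
the endpoint. -/
theorem statement14 (V1 V2 V3 : Submodule ℝ 𝕓) (hC : CarnotStep3 br V1 V2 V3)
    (γ : ℝ → 𝕓) (hγ : γ ∈ H1zero V1) (φ : ℝ → 𝕓) (hφ : φ ∈ H1zero V1)
    (h1 : curve φ 1 = 0) :
    dE br γ φ = (0, ∫ t in (0:ℝ)..1, br (curve φ t) (γ t),
      ∫ t in (0:ℝ)..1, br (curve γ t - (2:ℝ)⁻¹ • curve γ 1) (br (curve φ t) (γ t))) := by
  obtain ⟨-, -, -, -, halt, hjac⟩ := hC
  have hγ' := intervalIntegrable_of_mem_H1zero hγ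
  have hφ' := intervalIntegrable_of_mem_H1zero hφ
  have hdE : dE br γ φ = _ := ((hasDerivAt_F1 hγ' hφ').prodMk
    ((hasDerivAt_F2 br hγ' hφ').prodMk (hasDerivAt_F3 br hγ' hφ'))).deriv
  rw [hdE, h1, curve_curveBracket_comm_of_curve_eq_zero br halt hγ' hφ' h1,
    integral_cubicBracket_variation br halt hjac hγ' hφ' h1]
  simp only [Prod.mk.injEq, true_and, and_true]
  rw [← two_smul ℝ, inv_smul_smul₀ two_ne_zero]
  rfl
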